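/- In the abstract gradient-discretisation setting with the regularised-solver setting, for every i ≥ 1 one has the intermediate inequality L·‖e_i‖_m² + 2·δt·‖G e_i‖² ≤ ((L − 1/L_ζ)² / L)·‖e_{i−1}‖_m². -/

import Mathlib

/-
The error `e_i = v - v_i` satisfies
`L ⟨e_i, φ⟩_m + δt ⟨G e_i, G φ⟩ = ⟨(L v - Z(v)) - (L v_{i-1} - Z(v_{i-1})), φ⟩_m` for all `φ`.
Since `1/L_ζ ≤ Z' ≤ L`, the map `s ↦ L s - Z s` is `(L - 1/L_ζ)`-Lipschitz, so testing with
`φ = e_i` and using the weighted Cauchy–Schwarz inequality gives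
`L ‖e_i‖_m² + δt ‖G e_i‖² ≤ (L - 1/L_ζ) ‖e_{i-1}‖_m ‖e_i‖_m`, and Young's inequality absorbs
the factor `‖e_i‖_m` into the left-hand side.
-/

/-- Weighted inner product `⟨u, v⟩_m = ∑ j, m j * u j * v j` on `X = B → ℝ`. -/
noncomputable def innerM {B : Type*} [Fintype B] (m : B → ℝ) (u v : B → ℝ) : ℝ :=
  ∑ j, m j * u j * v j

/-- Weighted norm `‖u‖_m = ⟨u, u⟩_m^{1/2}`. -/
noncomputable def normM {B : Type*} [Fintype B] (m : B → ℝ) (u : B → ℝ) : ℝ :=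
  Real.sqrt (innerM m u u)

/-- The dual norm `‖v‖_* = sup { ⟨v, w⟩_m : w ∈ X, ‖G w‖ = 1 }`. -/
noncomputable def dualNorm {B : Type*} [Fintype B] (m : B → ℝ)
    {F : Type*} [NormedAddCommGroup F] [InnerProductSpace ℝ F]
    (G : (B → ℝ) →ₗ[ℝ] F) (v : B → ℝ) : ℝ :=
  sSup {r : ℝ | ∃ w : B → ℝ, ‖G w‖ = 1 ∧ r = innerM m v w}

section WeightedInner

variable {B : Type*} [Fintype B] (m : B → ℝ)

theorem innerM_sub_left (u w φ : B → ℝ) :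
    innerM m (u - w) φ = innerM m u φ - innerM m w φ := by
  simp only [innerM, ← Finset.sum_sub_distrib, Pi.sub_apply]
  exact Finset.sum_congr rfl fun j _ => by ring

theorem innerM_smul_left (c : ℝ) (u φ : B → ℝ) :
    innerM m (c • u) φ = c * innerM m u φ := by
  simp only [innerM, Finset.mul_sum, Pi.smul_apply, smul_eq_mul]
  exact Finset.sum_congr rfl fun j _ => by ring

variable {m}

theorem innerM_self_nonneg (hm : ∀ j, 0 ≤ m j) (u : B → ℝ) : 0 ≤ innerM m u u :=
  Finset.sum_nonneg fun j _ => by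
    simpa only [mul_assoc] using mul_nonneg (hm j) (mul_self_nonneg (u j))

theorem normM_sq (hm : ∀ j, 0 ≤ m j) (u : B → ℝ) : normM m u ^ 2 = innerM m u u :=
  Real.sq_sqrt (innerM_self_nonneg hm u)

theorem innerM_sq_le_of_sq_le {c : ℝ} {w d : B → ℝ} (hm : ∀ j, 0 ≤ m j)
    (hwd : ∀ j, w j ^ 2 ≤ c * d j ^ 2) (e : B → ℝ) :
    innerM m w e ^ 2 ≤ c * innerM m d d * innerM m e e := by
  have hsum : c * innerM m d d = ∑ j, m j * (c * d j ^ 2) := by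
    simp only [innerM, Finset.mul_sum]
    exact Finset.sum_congr rfl fun j _ => by ring
  rw [hsum]
  refine Finset.sum_sq_le_sum_mul_sum_of_sq_le_mul _
    (fun j _ => mul_nonneg (hm j) ((sq_nonneg _).trans (hwd j)))
    (fun j _ => by simpa only [mul_assoc] using mul_nonneg (hm j) (mul_self_nonneg (e j)))
    (fun j _ => ?_)
  calc (m j * w j * e j) ^ 2 = (m j * w j ^ 2) * (m j * e j ^ 2) := by ring
    _ ≤ (m j * (c * d j ^ 2)) * (m j * e j ^ 2) :=
        mul_le_mul_of_nonneg_right (mul_le_mul_of_nonneg_left (hwd j) (hm j))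
          (mul_nonneg (hm j) (sq_nonneg _))
    _ = m j * (c * d j ^ 2) * (m j * e j * e j) := by ring

theorem innerM_le_mul_normM_mul_normM {K : ℝ} {w d : B → ℝ} (hm : ∀ j, 0 ≤ m j) (hK : 0 ≤ K)
    (hwd : ∀ j, |w j| ≤ K * |d j|) (e : B → ℝ) :
    innerM m w e ≤ K * normM m d * normM m e := by
  have hsq : ∀ j, w j ^ 2 ≤ K ^ 2 * d j ^ 2 := fun j => by
    rw [← sq_abs (w j), ← sq_abs (d j), ← mul_pow]
    exact pow_le_pow_left₀ (abs_nonneg _) (hwd j) 2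
  calc innerM m w e ≤ √(K ^ 2 * innerM m d d * innerM m e e) :=
        (le_abs_self _).trans (Real.abs_le_sqrt (innerM_sq_le_of_sq_le hm hsq e))
    _ = K * normM m d * normM m e := by
        rw [Real.sqrt_mul (mul_nonneg (sq_nonneg K) (innerM_self_nonneg hm d)),
          Real.sqrt_mul (sq_nonneg K), Real.sqrt_sq hK, normM, normM]

end WeightedInner

theorem abs_mul_sub_sub_le_of_le_deriv_le {Z : ℝ → ℝ} {a L : ℝ} (hZ : Differentiable ℝ Z)
    (hZ' : ∀ s, a ≤ deriv Z s ∧ deriv Z s ≤ L) (x y : ℝ) :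
    |(L * x - Z x) - (L * y - Z y)| ≤ (L - a) * |x - y| := by
  have hf : ∀ s, HasDerivAt (fun s => L * s - Z s) (L - deriv Z s) s := fun s => by
    have h := ((hasDerivAt_id' s).const_mul L).sub (hZ s).hasDerivAt
    rw [mul_one] at h
    exact h
  refine Convex.norm_image_sub_le_of_norm_deriv_le (fun s _ => (hf s).differentiableAt)
    (fun s _ => ?_) convex_univ (Set.mem_univ y) (Set.mem_univ x)
  rw [(hf s).deriv, Real.norm_eq_abs, abs_le]
  constructor <;> linarith [hZ' s]

theorem lScheme_error_eq {B F : Type*} [Fintype B] [NormedAddCommGroup F]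
    [InnerProductSpace ℝ F]
    {m : B → ℝ} {G : (B → ℝ) →ₗ[ℝ] F} {δt L r : ℝ} {Z : ℝ → ℝ} {u uold unew φ : B → ℝ}
    (hu : innerM m (fun j => Z (u j)) φ + δt * (inner ℝ (G u) (G φ) : ℝ) = r)
    (hnew : L * innerM m unew φ + δt * (inner ℝ (G unew) (G φ) : ℝ)
      = innerM m (fun j => L * uold j - Z (uold j)) φ + r) :
    L * innerM m (u - unew) φ + δt * (inner ℝ (G (u - unew)) (G φ) : ℝ)
      = innerM m (fun j => (L * u j - Z (u j)) - (L * uold j - Z (uold j))) φ := by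
  have hold : (fun j => L * uold j - Z (uold j)) = L • uold - fun j => Z (uold j) := rfl
  have hw : (fun j => (L * u j - Z (u j)) - (L * uold j - Z (uold j)))
      = (L • u - fun j => Z (u j)) - (L • uold - fun j => Z (uold j)) := rfl
  rw [hold] at hnew
  rw [hw]
  simp only [innerM_sub_left, innerM_smul_left, map_sub, inner_sub_left] at hnew ⊢
  linear_combination hu - hnew

theorem add_two_mul_le_sq_div_of_le_mul {L K a c t : ℝ} (hL : 0 < L)
    (h : L * a ^ 2 + t ≤ K * c * a) : L * a ^ 2 + 2 * t ≤ K ^ 2 / L * c ^ 2 := by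
  rw [div_mul_eq_mul_div, le_div_iff₀ hL]
  nlinarith [sq_nonneg (K * c - L * a)]

theorem lScheme_step_error_le {B F : Type*} [Fintype B] [NormedAddCommGroup F]
    [InnerProductSpace ℝ F] {m : B → ℝ} (hm : ∀ j, 0 ≤ m j) {G : (B → ℝ) →ₗ[ℝ] F}
    {δt a L : ℝ} (hL : 0 < L) {Z : ℝ → ℝ} (hZ : Differentiable ℝ Z)
    (hZ' : ∀ s, a ≤ deriv Z s ∧ deriv Z s ≤ L) {b : (B → ℝ) → ℝ} {u uold unew : B → ℝ}
    (hu : ∀ φ, innerM m (fun j => Z (u j)) φ + δt * (inner ℝ (G u) (G φ) : ℝ) = b φ)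
    (hnew : ∀ φ, L * innerM m unew φ + δt * (inner ℝ (G unew) (G φ) : ℝ)
      = innerM m (fun j => L * uold j - Z (uold j)) φ + b φ) :
    L * normM m (u - unew) ^ 2 + 2 * δt * ‖G (u - unew)‖ ^ 2
      ≤ (L - a) ^ 2 / L * normM m (u - uold) ^ 2 := by
  have hLip : ∀ j, |(L * u j - Z (u j)) - (L * uold j - Z (uold j))|
      ≤ (L - a) * |(u - uold) j| := fun j => abs_mul_sub_sub_le_of_le_deriv_le hZ hZ' (u j) (uold j)
  have hkey := lScheme_error_eq (hu (u - unew)) (hnew (u - unew))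
  have hbound := innerM_le_mul_normM_mul_normM hm (by linarith [hZ' 0]) hLip (u - unew)
  rw [← hkey, ← normM_sq hm, real_inner_self_eq_norm_sq] at hbound
  rw [mul_assoc 2]
  exact add_two_mul_le_sq_div_of_le_mul hL hbound

theorem stmt_17_general {B : Type*} [Fintype B] (m : B → ℝ) (hm : ∀ j, 0 < m j)
    {F : Type*} [NormedAddCommGroup F] [InnerProductSpace ℝ F]
    (G : (B → ℝ) →ₗ[ℝ] F)
    (δt Lζ L : ℝ) (hLζ : 0 < Lζ)
    (Z : ℝ → ℝ) (hZ : Differentiable ℝ Z)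
    (hZ' : ∀ s : ℝ, 1 / Lζ ≤ deriv Z s ∧ deriv Z s ≤ L)
    (b : (B → ℝ) →ₗ[ℝ] ℝ)
    (v : B → ℝ)
    (hv : ∀ φ : B → ℝ,
      innerM m (fun j => Z (v j)) φ + δt * (inner ℝ (G v) (G φ) : ℝ) = b φ)
    (vseq : ℕ → B → ℝ)
    (hit : ∀ i : ℕ, 1 ≤ i → ∀ φ : B → ℝ,
      L * innerM m (vseq i) φ + δt * (inner ℝ (G (vseq i)) (G φ) : ℝ)
        = innerM m (fun j => L * vseq (i - 1) j - Z (vseq (i - 1) j)) φ + b φ) :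
    ∀ i : ℕ, 1 ≤ i →
      L * normM m (v - vseq i) ^ 2 + 2 * δt * ‖G (v - vseq i)‖ ^ 2
        ≤ ((L - 1 / Lζ) ^ 2 / L) * normM m (v - vseq (i - 1)) ^ 2 := by
  have hL : 0 < L := (one_div_pos.2 hLζ).trans_le ((hZ' 0).1.trans (hZ' 0).2)
  exact fun i hi => lScheme_step_error_le (fun j => (hm j).le) hL hZ hZ' hv (hit i hi)

/-- Intermediate inequality in the proof of Lemma 3.2 (after Hölder and Young):
`L ‖e_i‖_m² + 2 δt ‖G e_i‖² ≤ ((L - 1/L_ζ)²/L) ‖e_{i-1}‖_m²` for every `i ≥ 1`. -/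
theorem stmt_17 {B : Type*} [Fintype B] [Nonempty B] (m : B → ℝ) (hm : ∀ j, 0 < m j)
    {F : Type*} [NormedAddCommGroup F] [InnerProductSpace ℝ F]
    (G : (B → ℝ) →ₗ[ℝ] F) (hG : Function.Injective G)
    (δt Lζ L C : ℝ) (hδt : 0 < δt) (hLζ : 0 < Lζ) (hC : 0 < C)
    (Z : ℝ → ℝ) (hZ : Differentiable ℝ Z)
    (hZ' : ∀ s : ℝ, 1 / Lζ ≤ deriv Z s ∧ deriv Z s ≤ L)
    (hpoin : ∀ w : B → ℝ, normM m w ≤ C * ‖G w‖)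
    (b : (B → ℝ) →ₗ[ℝ] ℝ)
    (v : B → ℝ)
    (hv : ∀ φ : B → ℝ,
      innerM m (fun j => Z (v j)) φ + δt * (inner ℝ (G v) (G φ) : ℝ) = b φ)
    (vseq : ℕ → B → ℝ)
    (hit : ∀ i : ℕ, 1 ≤ i → ∀ φ : B → ℝ,
      L * innerM m (vseq i) φ + δt * (inner ℝ (G (vseq i)) (G φ) : ℝ)
        = innerM m (fun j => L * vseq (i - 1) j - Z (vseq (i - 1) j)) φ + b φ) :
    ∀ i : ℕ, 1 ≤ i →
      L * normM m (v - vseq i) ^ 2 + 2 * δt * ‖G (v - vseq i)‖ ^ 2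
        ≤ ((L - 1 / Lζ) ^ 2 / L) * normM m (v - vseq (i - 1)) ^ 2 :=
  stmt_17_general m hm G δt Lζ L hLζ Z hZ hZ' b v hv vseq hit
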